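/- Let α ∈ (2,∞) and let F : (0,∞) → (0,∞) be continuous, strictly increasing with lim_{t→∞} F(t) = ∞, regularly varying of index 1/α, and satisfy lim_{t→∞} F(t)/√(log t) = ∞. Let U : ℝ² → (0,∞) be measurable, Lebesgue integrable, and have regular (F,α)-decay, and let ℓ > 0. Then for every ε ∈ (0,1): liminf_{|x|→∞} F(1/(|φ₀|² * U)(x))/|x| ≥ (1−ε)²/(1+ε)^{1/α} and limsup_{|x|→∞} F(1/(|φ₀|² * U)(x))/|x| ≤ (1+ε)²/(1−ε)^{1/α}. -/

import Mathlib

/-!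
Let `G` be an inverse of `F`, so that regular decay says `1 / U z ≈ G ‖z‖`. For `‖x‖` large
and `θ` small, on the ball `‖y‖ < θ‖x‖` the values `U (x - y)` lie between
`1 / G ((1 + θ)² ‖x‖)` and `1 / G ((1 - θ)² ‖x‖)`. The Gaussian puts mass at least `1 - θ` on
this ball, and off it contributes at most `C exp (-(θ‖x‖)² / (2ℓ²))`, which is at most
`θ / G ((1 - θ)² ‖x‖)` because `F` grows faster than `√log`, i.e. `G` slower than any Gaussian.
So `1 / (|φ₀|² * U) x` is squeezed between `(1 + θ)⁻¹ G ((1 - θ)² ‖x‖)` and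
`(1 - θ)⁻¹ G ((1 + θ)² ‖x‖)`, and regular variation of `F` turns this into
`F (1 / (|φ₀|² * U) x) / ‖x‖ → 1`, which lies between the two stated bounds.
-/

open MeasureTheory Filter Real

noncomputable section

abbrev E2 := EuclideanSpace ℝ (Fin 2)

/-- The centred Gaussian probability density `|φ₀(x)|² = (2πℓ²)⁻¹ exp(-|x|²/(2ℓ²))` on `ℝ²`. -/
def phiSq (l : ℝ) (x : E2) : ℝ := (2 * π * l ^ 2)⁻¹ * Real.exp (-‖x‖ ^ 2 / (2 * l ^ 2))

/-- The Gaussian convolution `(|φ₀|² * U)(x) = ∫ |φ₀(y)|² U(x-y) dy`. -/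
def gaussConv (l : ℝ) (U : E2 → ℝ) (x : E2) : ℝ := ∫ y : E2, phiSq l y * U (x - y)

open Set Metric Function Topology

section Asymptotics

variable {X : Type*} {L : Filter X} {f g : X → ℝ}

theorem eventually_mul_le_and_le_mul_of_tendsto_div {c η : ℝ}
    (h : Tendsto (fun x => f x / g x) L (𝓝 c)) (hg : ∀ᶠ x in L, 0 < g x) (hη : 0 < η) :
    ∀ᶠ x in L, (c - η) * g x ≤ f x ∧ f x ≤ (c + η) * g x := by
  filter_upwards [h.eventually (Ioo_mem_nhds (by linarith : c - η < c) (by linarith : c < c + η)),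
    hg] with x hx hgx
  rw [lt_div_iff₀ hgx, div_lt_iff₀ hgx] at hx
  exact ⟨hx.1.le, hx.2.le⟩

theorem tendsto_div_of_forall_eventually_mul_le_and_le_mul {a b : ℝ → ℝ}
    (ha : Tendsto a (𝓝[>] 0) (𝓝 1)) (hb : Tendsto b (𝓝[>] 0) (𝓝 1))
    (hg : ∀ᶠ x in L, 0 < g x)
    (h : ∀ θ ∈ Ioo (0 : ℝ) 1, ∀ᶠ x in L, b θ * g x ≤ f x ∧ f x ≤ a θ * g x) :
    Tendsto (fun x => f x / g x) L (𝓝 1) := by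
  refine tendsto_order.2 ⟨fun c hc => ?_, fun c hc => ?_⟩
  · obtain ⟨θ, hcb, hθ⟩ := ((hb.eventually (lt_mem_nhds hc)).and (Ioo_mem_nhdsGT one_pos)).exists
    filter_upwards [hg, h θ hθ] with x hgx hx
    rw [lt_div_iff₀ hgx]
    exact (mul_lt_mul_of_pos_right hcb hgx).trans_le hx.1
  · obtain ⟨θ, hac, hθ⟩ := ((ha.eventually (gt_mem_nhds hc)).and (Ioo_mem_nhdsGT one_pos)).exists
    filter_upwards [hg, h θ hθ] with x hgx hx
    rw [div_lt_iff₀ hgx]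
    exact hx.2.trans_lt (mul_lt_mul_of_pos_right hac hgx)

end Asymptotics

theorem eventually_forall_mem_ball_sub {E : Type*} [SeminormedAddCommGroup E] {P : E → Prop}
    (hP : ∀ᶠ z in comap norm atTop, P z) {θ : ℝ} (hθ : θ < 1) :
    ∀ᶠ x in comap norm atTop, ∀ y ∈ ball 0 (θ * ‖x‖), P (x - y) := by
  obtain ⟨R, hR⟩ := eventually_atTop.1 (eventually_comap.1 hP)
  have h : Tendsto (fun x : E => (1 - θ) * ‖x‖) (comap norm atTop) atTop :=
    tendsto_comap.const_mul_atTop (by linarith)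
  filter_upwards [h.eventually_ge_atTop R] with x hx y hy
  rw [mem_ball_zero_iff] at hy
  exact hR _ (by linarith [norm_sub_norm_le x y]) _ rfl

section RightInverse

variable {F G : ℝ → ℝ} {m₀ : ℝ}

theorem exists_rightInvOn_Ici_of_continuousOn {a : ℝ} (ha : 0 < a)
    (hFcont : ContinuousOn F (Ioi 0)) (hFtop : Tendsto F atTop atTop) :
    ∃ G : ℝ → ℝ, MapsTo G (Ici (F a)) (Ioi 0) ∧ RightInvOn G F (Ici (F a)) := by
  have hsurj : SurjOn F (Ici a) (Ici (F a)) := by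
    intro m (hm : F a ≤ m)
    obtain ⟨T, hmT, haT⟩ :=
      ((hFtop.eventually_ge_atTop m).and (eventually_ge_atTop a)).exists
    obtain ⟨t, ht, hFt⟩ := intermediate_value_Icc haT
      (hFcont.mono fun t ht => ha.trans_le ht.1) ⟨hm, hmT⟩
    exact ⟨t, ht.1, hFt⟩
  exact ⟨invFunOn F (Ici a), fun m hm => ha.trans_le (hsurj.mapsTo_invFunOn hm),
    hsurj.rightInvOn_invFunOn⟩

theorem le_rightInvOn_iff (hF : StrictMonoOn F (Ioi 0)) (hGmaps : MapsTo G (Ici m₀) (Ioi 0))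
    (hGinv : RightInvOn G F (Ici m₀)) {t m : ℝ} (ht : 0 < t) (hm : m₀ ≤ m) : t ≤ G m ↔ F t ≤ m := by
  conv_rhs => rw [← hGinv hm]
  exact (hF.le_iff_le ht (hGmaps hm)).symm

theorem rightInvOn_le_iff (hF : StrictMonoOn F (Ioi 0)) (hGmaps : MapsTo G (Ici m₀) (Ioi 0))
    (hGinv : RightInvOn G F (Ici m₀)) {t m : ℝ} (ht : 0 < t) (hm : m₀ ≤ m) :
    G m ≤ t ↔ m ≤ F t := by
  conv_rhs => rw [← hGinv hm]
  exact (hF.le_iff_le (hGmaps hm) ht).symm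

theorem tendsto_atTop_of_rightInvOn (hF : StrictMonoOn F (Ioi 0))
    (hGmaps : MapsTo G (Ici m₀) (Ioi 0)) (hGinv : RightInvOn G F (Ici m₀)) :
    Tendsto G atTop atTop := by
  refine tendsto_atTop.2 fun b => ?_
  filter_upwards [eventually_ge_atTop m₀, eventually_ge_atTop (F (max b 1))] with m hm hbm
  exact (le_max_left b 1).trans ((le_rightInvOn_iff hF hGmaps hGinv (by positivity) hm).2 hbm)

theorem tendsto_apply_mul_rightInvOn_div (hF : StrictMonoOn F (Ioi 0))
    (hGmaps : MapsTo G (Ici m₀) (Ioi 0)) (hGinv : RightInvOn G F (Ici m₀)) {c L : ℝ}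
    (hFc : Tendsto (fun t => F (c * t) / F t) atTop (𝓝 L)) :
    Tendsto (fun m => F (c * G m) / m) atTop (𝓝 L) :=
  (hFc.comp (tendsto_atTop_of_rightInvOn hF hGmaps hGinv)).congr' <|
    (eventually_ge_atTop m₀).mono fun m hm => by simp only [comp_apply, hGinv hm]

end RightInverse

theorem eventually_le_apply_mul_exp_sq {F : ℝ → ℝ}
    (hF : Tendsto (fun t => F t / √(log t)) atTop atTop) {c κ : ℝ} (hc : 0 < c) (hκ : 0 < κ) :
    ∀ᶠ R in atTop, R ≤ F (c * exp (κ * R ^ 2)) := by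
  have hsq : Tendsto (fun R : ℝ => R ^ 2) atTop atTop := tendsto_pow_atTop two_ne_zero
  have hs : Tendsto (fun R => c * exp (κ * R ^ 2)) atTop atTop :=
    (tendsto_exp_atTop.comp (hsq.const_mul_atTop hκ)).const_mul_atTop hc
  filter_upwards [hs.eventually (hF.eventually_ge_atTop (2 / √κ)),
    (hsq.const_mul_atTop (by positivity : 0 < 3 * κ / 4)).eventually_ge_atTop (-log c),
    eventually_gt_atTop 0] with R hFR hlogc hR
  have hlog : √κ / 2 * R ≤ √(log (c * exp (κ * R ^ 2))) := by
    rw [log_mul hc.ne' (exp_pos _).ne', log_exp]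
    refine le_sqrt_of_sq_le ?_
    rw [mul_pow, div_pow, sq_sqrt hκ.le]
    linarith
  have hpos : 0 < √(log (c * exp (κ * R ^ 2))) := lt_of_lt_of_le (by positivity) hlog
  calc R = 2 / √κ * (√κ / 2 * R) := by field_simp
    _ ≤ 2 / √κ * √(log (c * exp (κ * R ^ 2))) := by gcongr
    _ ≤ F (c * exp (κ * R ^ 2)) := (le_div_iff₀ hpos).1 hFR

section Gaussian

variable {l : ℝ}

theorem phiSq_pos (hl : l ≠ 0) (x : E2) : 0 < phiSq l x := by
  unfold phiSq
  positivity

theorem phiSq_le_of_le_norm {r : ℝ} {x : E2} (hr : 0 ≤ r) (hx : r ≤ ‖x‖) :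
    phiSq l x ≤ (2 * π * l ^ 2)⁻¹ * exp (-r ^ 2 / (2 * l ^ 2)) := by
  unfold phiSq
  gcongr

theorem continuous_phiSq : Continuous (phiSq l) := by
  unfold phiSq
  fun_prop

theorem integral_phiSq (hl : l ≠ 0) : ∫ x, phiSq l x = 1 := by
  have h := GaussianFourier.integral_rexp_neg_mul_sq_norm (V := E2)
    (by positivity : 0 < (2 * l ^ 2)⁻¹)
  rw [finrank_euclideanSpace_fin, Nat.cast_ofNat, div_self two_ne_zero, rpow_one] at h
  simp_rw [phiSq, neg_div, div_eq_inv_mul, ← neg_mul]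
  rw [integral_const_mul, h]
  field_simp

theorem integrable_phiSq (hl : l ≠ 0) : Integrable (phiSq l) :=
  .of_integral_ne_zero (by rw [integral_phiSq hl]; exact one_ne_zero)

theorem tendsto_setIntegral_ball_phiSq (hl : l ≠ 0) :
    Tendsto (fun r => ∫ y in ball (0 : E2) r, phiSq l y) atTop (𝓝 1) := by
  have h := tendsto_setIntegral_of_monotone (μ := volume) (s := fun r : ℝ => ball (0 : E2) r)
    (fun _ => measurableSet_ball) (fun _ _ h => ball_subset_ball h)
    (integrable_phiSq hl).integrableOn
  rwa [iUnion_eq_univ_iff.2 fun y => ⟨‖y‖ + 1, by simp⟩, setIntegral_univ,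
    integral_phiSq hl] at h

end Gaussian

theorem integral_pos_of_forall_pos {α : Type*} [TopologicalSpace α] [MeasurableSpace α]
    [Nonempty α] {μ : Measure α} [μ.IsOpenPosMeasure] {f : α → ℝ} (hf : ∀ x, 0 < f x)
    (hfi : Integrable f μ) : 0 < ∫ x, f x ∂μ := by
  refine (integral_pos_iff_support_of_nonneg (fun x => (hf x).le) hfi).2 ?_
  rw [(support_eq_iff.2 ⟨fun x _ => (hf x).ne', fun x hx => hx.elim trivial⟩ :
    support f = univ)]
  exact isOpen_univ.measure_pos μ univ_nonempty

section Convolution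

variable {l : ℝ} {U : E2 → ℝ}

theorem integrable_phiSq_mul_comp_sub (hl : l ≠ 0) (hUint : Integrable U) (x : E2) :
    Integrable (fun y => phiSq l y * U (x - y)) :=
  (hUint.comp_sub_left x).bdd_mul continuous_phiSq.aestronglyMeasurable
    (Eventually.of_forall fun y => by
      simpa [abs_of_pos (phiSq_pos hl y)] using phiSq_le_of_le_norm le_rfl (norm_nonneg y))

theorem gaussConv_pos (hl : l ≠ 0) (hUpos : ∀ z, 0 < U z) (hUint : Integrable U) (x : E2) :
    0 < gaussConv l U x :=
  integral_pos_of_forall_pos (fun y => mul_pos (phiSq_pos hl y) (hUpos _))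
    (integrable_phiSq_mul_comp_sub hl hUint x)

theorem mul_setIntegral_phiSq_le_gaussConv (hl : l ≠ 0) (hU : ∀ z, 0 ≤ U z)
    (hUint : Integrable U) {x : E2} {r v : ℝ} (hv : ∀ y ∈ ball 0 r, v ≤ U (x - y)) :
    v * ∫ y in ball 0 r, phiSq l y ≤ gaussConv l U x := by
  have hint := integrable_phiSq_mul_comp_sub hl hUint x
  calc v * ∫ y in ball 0 r, phiSq l y = ∫ y in ball 0 r, phiSq l y * v := by
        rw [integral_mul_const, mul_comm]
    _ ≤ ∫ y in ball 0 r, phiSq l y * U (x - y) :=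
        setIntegral_mono_on ((integrable_phiSq hl).mul_const v).integrableOn hint.integrableOn
          measurableSet_ball fun y hy => mul_le_mul_of_nonneg_left (hv y hy) (phiSq_pos hl y).le
    _ ≤ gaussConv l U x :=
        setIntegral_le_integral hint (.of_forall fun y => mul_nonneg (phiSq_pos hl y).le (hU _))

theorem gaussConv_le (hl : l ≠ 0) (hU : ∀ z, 0 ≤ U z) (hUint : Integrable U) {x : E2}
    {r v : ℝ} (hr : 0 ≤ r) (hv0 : 0 ≤ v) (hv : ∀ y ∈ ball 0 r, U (x - y) ≤ v) :
    gaussConv l U x ≤ v + (2 * π * l ^ 2)⁻¹ * exp (-r ^ 2 / (2 * l ^ 2)) * ∫ z, U z := by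
  set K := (2 * π * l ^ 2)⁻¹ * exp (-r ^ 2 / (2 * l ^ 2))
  have hK : 0 ≤ K := by positivity
  have hpoint : ∀ y, phiSq l y * U (x - y) ≤ phiSq l y * v + K * U (x - y) := by
    intro y
    have hφ := (phiSq_pos hl y).le
    by_cases hy : y ∈ ball 0 r
    · nlinarith [hv y hy, hU (x - y)]
    · rw [mem_ball_zero_iff, not_lt] at hy
      nlinarith [phiSq_le_of_le_norm (l := l) hr hy, hU (x - y)]
  have hUx : Integrable (fun y => U (x - y)) := hUint.comp_sub_left x
  calc gaussConv l U x ≤ ∫ y, (phiSq l y * v + K * U (x - y)) :=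
        integral_mono (integrable_phiSq_mul_comp_sub hl hUint x)
          (((integrable_phiSq hl).mul_const v).add (hUx.const_mul K)) hpoint
    _ = v + K * ∫ z, U z := by
        rw [integral_add ((integrable_phiSq hl).mul_const v) (hUx.const_mul K),
          integral_mul_const, integral_phiSq hl, integral_const_mul,
          integral_sub_left_eq_self U volume x, one_mul]

end Convolution

section Bounds

variable {F G : ℝ → ℝ} {m₀ l : ℝ} {U : E2 → ℝ}

theorem eventually_gaussian_tail_le (hF : StrictMonoOn F (Ioi 0))
    (hGmaps : MapsTo G (Ici m₀) (Ioi 0)) (hGinv : RightInvOn G F (Ici m₀))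
    (hFsub : Tendsto (fun t => F t / √(log t)) atTop atTop) {A θ : ℝ} (hA : 0 < A)
    (hθ : 0 < θ) (hl : l ≠ 0) :
    ∀ᶠ R in atTop, ∀ m, m₀ ≤ m → m ≤ R → A * exp (-(θ * R) ^ 2 / (2 * l ^ 2)) ≤ θ * (G m)⁻¹ := by
  filter_upwards [eventually_le_apply_mul_exp_sq hFsub (div_pos hθ hA)
    (by positivity : 0 < θ ^ 2 / (2 * l ^ 2))] with R hR m hm hmR
  have hGs : G m ≤ θ / A * exp (θ ^ 2 / (2 * l ^ 2) * R ^ 2) :=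
    (rightInvOn_le_iff hF hGmaps hGinv (by positivity) hm).2 (hmR.trans hR)
  have hGm : 0 < G m := hGmaps hm
  calc A * exp (-(θ * R) ^ 2 / (2 * l ^ 2))
      = θ * (θ / A * exp (θ ^ 2 / (2 * l ^ 2) * R ^ 2))⁻¹ := by
        rw [show -(θ * R) ^ 2 / (2 * l ^ 2) = -(θ ^ 2 / (2 * l ^ 2) * R ^ 2) by ring, exp_neg]
        field_simp
    _ ≤ θ * (G m)⁻¹ := by gcongr

theorem eventually_apply_one_div_gaussConv_le {ρ θ : ℝ} (hF : StrictMonoOn F (Ioi 0))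
    (hGmaps : MapsTo G (Ici m₀) (Ioi 0)) (hGinv : RightInvOn G F (Ici m₀))
    (hFreg : Tendsto (fun t => F ((1 - θ)⁻¹ * t) / F t) atTop (𝓝 ((1 - θ)⁻¹ ^ ρ)))
    (hUpos : ∀ z, 0 < U z) (hUint : Integrable U)
    (hUdecay : Tendsto (fun z : E2 => F (1 / U z) / ‖z‖) (comap norm atTop) (𝓝 1))
    (hl : l ≠ 0) (hθ : θ ∈ Ioo 0 1) :
    ∀ᶠ x in comap norm atTop,
      F (1 / gaussConv l U x) ≤ ((1 - θ)⁻¹ ^ ρ + θ) * (1 + θ) ^ 2 * ‖x‖ := by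
  obtain ⟨hθ0, hθ1⟩ := hθ
  have hnorm : Tendsto (fun x : E2 => ‖x‖) (comap norm atTop) atTop := tendsto_comap
  have hM : Tendsto (fun x : E2 => (1 + θ) ^ 2 * ‖x‖) (comap norm atTop) atTop :=
    hnorm.const_mul_atTop (by positivity)
  have hdecay : ∀ᶠ z in comap norm atTop, F (1 / U z) ≤ (1 + θ) * ‖z‖ :=
    (eventually_mul_le_and_le_mul_of_tendsto_div hUdecay (hnorm.eventually_gt_atTop 0)
      hθ0).mono fun _ h => h.2
  have hrv := eventually_mul_le_and_le_mul_of_tendsto_div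
    (tendsto_apply_mul_rightInvOn_div hF hGmaps hGinv hFreg) (eventually_gt_atTop 0) hθ0
  filter_upwards [hM.eventually_ge_atTop m₀, hM.eventually hrv,
    (hnorm.const_mul_atTop hθ0).eventually
      ((tendsto_setIntegral_ball_phiSq hl).eventually_const_le (by linarith : 1 - θ < 1)),
    eventually_forall_mem_ball_sub hdecay hθ1] with x hMm₀ hrvx hmass hdec
  have hGM : 0 < G ((1 + θ) ^ 2 * ‖x‖) := hGmaps hMm₀
  have hUge : ∀ y ∈ ball 0 (θ * ‖x‖), (G ((1 + θ) ^ 2 * ‖x‖))⁻¹ ≤ U (x - y) := by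
    intro y hy
    rw [inv_le_comm₀ hGM (hUpos _), ← one_div]
    refine (le_rightInvOn_iff hF hGmaps hGinv (one_div_pos.2 (hUpos _)) hMm₀).2
      ((hdec y hy).trans ?_)
    rw [mem_ball_zero_iff] at hy
    rw [sq, mul_assoc]
    gcongr
    linarith [norm_sub_le x y]
  have hconv : (G ((1 + θ) ^ 2 * ‖x‖))⁻¹ * (1 - θ) ≤ gaussConv l U x :=
    (mul_le_mul_of_nonneg_left hmass (by positivity)).trans
      (mul_setIntegral_phiSq_le_gaussConv hl (fun z => (hUpos z).le) hUint hUge)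
  calc F (1 / gaussConv l U x) ≤ F ((1 - θ)⁻¹ * G ((1 + θ) ^ 2 * ‖x‖)) := by
        refine hF.monotoneOn (mem_Ioi.2 (one_div_pos.2 (lt_of_lt_of_le ?_ hconv)))
          (mem_Ioi.2 ?_) ?_
        · exact mul_pos (inv_pos.2 hGM) (by linarith)
        · exact mul_pos (inv_pos.2 (by linarith)) hGM
        · refine (one_div_le_one_div_of_le
            (mul_pos (inv_pos.2 hGM) (by linarith)) hconv).trans_eq ?_
          field_simp
    _ ≤ ((1 - θ)⁻¹ ^ ρ + θ) * ((1 + θ) ^ 2 * ‖x‖) := hrvx.2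
    _ = ((1 - θ)⁻¹ ^ ρ + θ) * (1 + θ) ^ 2 * ‖x‖ := (mul_assoc _ _ _).symm

theorem eventually_le_apply_one_div_gaussConv {ρ θ : ℝ} (hF : StrictMonoOn F (Ioi 0))
    (hGmaps : MapsTo G (Ici m₀) (Ioi 0)) (hGinv : RightInvOn G F (Ici m₀))
    (hFreg : Tendsto (fun t => F ((1 + θ)⁻¹ * t) / F t) atTop (𝓝 ((1 + θ)⁻¹ ^ ρ)))
    (hFsub : Tendsto (fun t => F t / √(log t)) atTop atTop)
    (hUpos : ∀ z, 0 < U z) (hUint : Integrable U)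
    (hUdecay : Tendsto (fun z : E2 => F (1 / U z) / ‖z‖) (comap norm atTop) (𝓝 1))
    (hl : l ≠ 0) (hθ : θ ∈ Ioo 0 1) :
    ∀ᶠ x in comap norm atTop,
      ((1 + θ)⁻¹ ^ ρ - θ) * (1 - θ) ^ 2 * ‖x‖ ≤ F (1 / gaussConv l U x) := by
  obtain ⟨hθ0, hθ1⟩ := hθ
  have hnorm : Tendsto (fun x : E2 => ‖x‖) (comap norm atTop) atTop := tendsto_comap
  have hm : Tendsto (fun x : E2 => (1 - θ) ^ 2 * ‖x‖) (comap norm atTop) atTop :=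
    hnorm.const_mul_atTop (pow_pos (by linarith) 2)
  have hdecay : ∀ᶠ z in comap norm atTop, (1 - θ) * ‖z‖ ≤ F (1 / U z) :=
    (eventually_mul_le_and_le_mul_of_tendsto_div hUdecay (hnorm.eventually_gt_atTop 0)
      hθ0).mono fun _ h => h.1
  have hrv := eventually_mul_le_and_le_mul_of_tendsto_div
    (tendsto_apply_mul_rightInvOn_div hF hGmaps hGinv hFreg) (eventually_gt_atTop 0) hθ0
  have hIU : 0 < ∫ z, U z := integral_pos_of_forall_pos hUpos hUint
  filter_upwards [hm.eventually_ge_atTop m₀, hm.eventually hrv,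
    hnorm.eventually (eventually_gaussian_tail_le hF hGmaps hGinv hFsub
      (A := (2 * π * l ^ 2)⁻¹ * ∫ z, U z) (by positivity) hθ0 hl),
    eventually_forall_mem_ball_sub hdecay hθ1] with x hmm₀ hrvx htail hdec
  have hGm : 0 < G ((1 - θ) ^ 2 * ‖x‖) := hGmaps hmm₀
  have hUle : ∀ y ∈ ball 0 (θ * ‖x‖), U (x - y) ≤ (G ((1 - θ) ^ 2 * ‖x‖))⁻¹ := by
    intro y hy
    rw [le_inv_comm₀ (hUpos _) hGm, ← one_div]
    refine (rightInvOn_le_iff hF hGmaps hGinv (one_div_pos.2 (hUpos _)) hmm₀).2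
      (le_trans ?_ (hdec y hy))
    rw [mem_ball_zero_iff] at hy
    rw [sq, mul_assoc]
    gcongr
    linarith [norm_sub_norm_le x y]
  have hconv : gaussConv l U x ≤ (1 + θ) * (G ((1 - θ) ^ 2 * ‖x‖))⁻¹ := by
    have hsplit := gaussConv_le hl (fun z => (hUpos z).le) hUint (by positivity) (by positivity)
      hUle
    have hfar := htail _ hmm₀ (by nlinarith [norm_nonneg x])
    linarith
  have hconv0 := gaussConv_pos hl hUpos hUint x
  calc ((1 + θ)⁻¹ ^ ρ - θ) * (1 - θ) ^ 2 * ‖x‖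
      = ((1 + θ)⁻¹ ^ ρ - θ) * ((1 - θ) ^ 2 * ‖x‖) := mul_assoc _ _ _
    _ ≤ F ((1 + θ)⁻¹ * G ((1 - θ) ^ 2 * ‖x‖)) := hrvx.1
    _ ≤ F (1 / gaussConv l U x) := by
        refine hF.monotoneOn (mem_Ioi.2 (by positivity)) (mem_Ioi.2 (one_div_pos.2 hconv0)) ?_
        refine (le_one_div (by positivity) hconv0).2 (hconv.trans_eq ?_)
        field_simp

end Bounds

theorem tendsto_apply_one_div_gaussConv_div_norm {F : ℝ → ℝ} {U : E2 → ℝ} {ρ l : ℝ}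
    (hFcont : ContinuousOn F (Ioi 0)) (hFmono : StrictMonoOn F (Ioi 0))
    (hFtop : Tendsto F atTop atTop)
    (hFreg : ∀ c > 0, Tendsto (fun t => F (c * t) / F t) atTop (𝓝 (c ^ ρ)))
    (hFsub : Tendsto (fun t => F t / √(log t)) atTop atTop)
    (hUpos : ∀ z, 0 < U z) (hUint : Integrable U)
    (hUdecay : Tendsto (fun z : E2 => F (1 / U z) / ‖z‖) (comap norm atTop) (𝓝 1))
    (hl : l ≠ 0) :
    Tendsto (fun x : E2 => F (1 / gaussConv l U x) / ‖x‖) (comap norm atTop) (𝓝 1) := by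
  obtain ⟨G, hGmaps, hGinv⟩ := exists_rightInvOn_Ici_of_continuousOn one_pos hFcont hFtop
  refine tendsto_div_of_forall_eventually_mul_le_and_le_mul
    (a := fun θ => ((1 - θ)⁻¹ ^ ρ + θ) * (1 + θ) ^ 2)
    (b := fun θ => ((1 + θ)⁻¹ ^ ρ - θ) * (1 - θ) ^ 2) ?_ ?_
    (tendsto_comap.eventually_gt_atTop 0) fun θ hθ => ?_
  · have h : ContinuousAt (fun θ : ℝ => ((1 - θ)⁻¹ ^ ρ + θ) * (1 + θ) ^ 2) 0 := by
      fun_prop (disch := norm_num)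
    simpa using h.tendsto.mono_left nhdsWithin_le_nhds
  · have h : ContinuousAt (fun θ : ℝ => ((1 + θ)⁻¹ ^ ρ - θ) * (1 - θ) ^ 2) 0 := by
      fun_prop (disch := norm_num)
    simpa using h.tendsto.mono_left nhdsWithin_le_nhds
  · exact (eventually_le_apply_one_div_gaussConv hFmono hGmaps hGinv
      (hFreg _ (inv_pos.2 (by linarith [hθ.1]))) hFsub hUpos hUint hUdecay hl hθ).and
      (eventually_apply_one_div_gaussConv_le hFmono hGmaps hGinv
        (hFreg _ (inv_pos.2 (sub_pos.2 hθ.2))) hUpos hUint hUdecay hl hθ)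

theorem stmt_10_general
    (α : ℝ) (hα : 2 < α)
    (F : ℝ → ℝ)
    (hFcont : ContinuousOn F (Set.Ioi 0))
    (hFmono : StrictMonoOn F (Set.Ioi 0))
    (hFtop : Tendsto F atTop atTop)
    (hFreg : ∀ c > 0, Tendsto (fun t : ℝ => F (c * t) / F t) atTop (nhds (c ^ (1 / α))))
    (hFsub : Tendsto (fun t : ℝ => F t / Real.sqrt (Real.log t)) atTop atTop)
    (U : E2 → ℝ)
    (hUpos : ∀ x, 0 < U x)
    (hUint : Integrable U)
    (hUdecay : Tendsto (fun x : E2 => F (1 / U x) / ‖x‖)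
      (comap (fun x : E2 => ‖x‖) atTop) (nhds 1))
    (l : ℝ) (hl : 0 < l)
    (ε : ℝ) (hε : ε ∈ Set.Ioo (0 : ℝ) 1) :
    (1 - ε) ^ 2 / (1 + ε) ^ (1 / α) ≤
        Filter.liminf (fun x : E2 => F (1 / gaussConv l U x) / ‖x‖)
          (comap (fun x : E2 => ‖x‖) atTop) ∧
      Filter.limsup (fun x : E2 => F (1 / gaussConv l U x) / ‖x‖)
          (comap (fun x : E2 => ‖x‖) atTop) ≤
        (1 + ε) ^ 2 / (1 - ε) ^ (1 / α) := by
  obtain ⟨hε0, hε1⟩ := hε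
  have h := tendsto_apply_one_div_gaussConv_div_norm hFcont hFmono hFtop hFreg hFsub hUpos hUint
    hUdecay hl.ne'
  have : (comap (fun x : E2 => ‖x‖) atTop).NeBot := by
    rw [comap_norm_atTop]
    infer_instance
  have hρ : 0 ≤ 1 / α := div_nonneg zero_le_one (by linarith)
  rw [h.liminf_eq, h.limsup_eq, div_le_one (rpow_pos_of_pos (by linarith) _),
    one_le_div (rpow_pos_of_pos (by linarith) _)]
  exact ⟨(by nlinarith : (1 - ε) ^ 2 ≤ 1).trans (one_le_rpow (by linarith) hρ),
    (rpow_le_one (by linarith) (by linarith) hρ).trans (by nlinarith)⟩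

/-- liminf/limsup bounds for `F(1/(|φ₀|²*U)(x))/|x|` as `|x| → ∞`, for every `ε ∈ (0,1)`. -/
theorem stmt_10
    (α : ℝ) (hα : 2 < α)
    (F : ℝ → ℝ)
    (hFpos : ∀ t > 0, 0 < F t)
    (hFcont : ContinuousOn F (Set.Ioi 0))
    (hFmono : StrictMonoOn F (Set.Ioi 0))
    (hFtop : Tendsto F atTop atTop)
    (hFreg : ∀ c > 0, Tendsto (fun t : ℝ => F (c * t) / F t) atTop (nhds (c ^ (1 / α))))
    (hFsub : Tendsto (fun t : ℝ => F t / Real.sqrt (Real.log t)) atTop atTop)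
    (U : E2 → ℝ)
    (hUpos : ∀ x, 0 < U x)
    (hUmeas : Measurable U)
    (hUint : Integrable U)
    (hUdecay : Tendsto (fun x : E2 => F (1 / U x) / ‖x‖)
      (comap (fun x : E2 => ‖x‖) atTop) (nhds 1))
    (l : ℝ) (hl : 0 < l)
    (ε : ℝ) (hε : ε ∈ Set.Ioo (0 : ℝ) 1) :
    (1 - ε) ^ 2 / (1 + ε) ^ (1 / α) ≤
        Filter.liminf (fun x : E2 => F (1 / gaussConv l U x) / ‖x‖)
          (comap (fun x : E2 => ‖x‖) atTop) ∧
      Filter.limsup (fun x : E2 => F (1 / gaussConv l U x) / ‖x‖)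
          (comap (fun x : E2 => ‖x‖) atTop) ≤
        (1 + ε) ^ 2 / (1 - ε) ^ (1 / α) :=
  stmt_10_general α hα F hFcont hFmono hFtop hFreg hFsub U hUpos hUint hUdecay l hl ε hε
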